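/- For every connected graph G, the connected domination number satisfies γ_c(G) ≤ γ_cg(G) ≤ 2γ_c(G) − 1, where γ_cg(G) is the game connected domination number (Dominator-start). -/

import Mathlib

open Finset

namespace ConnDomGame

variable {V : Type*} [Fintype V] [DecidableEq V]

/-- The closed neighborhood of a finite set of vertices. -/
def nbhd (G : SimpleGraph V) [DecidableRel G.Adj] (D : Finset V) : Finset V :=
  univ.filter fun u => u ∈ D ∨ ∃ v ∈ D, G.Adj u v

/-- The legal moves in the connected domination game on `G` with predominated set `S`,
from the position where the set of played vertices is `D`: a legal move must dominate
a not-yet-dominated vertex and (except for the first move) be adjacent to a played vertex. -/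
def legalMoves (G : SimpleGraph V) [DecidableRel G.Adj] (S D : Finset V) : Finset V :=
  univ.filter fun v =>
    ¬ (nbhd G {v} ⊆ S ∪ nbhd G D) ∧ (D = ∅ ∨ ∃ u ∈ D, G.Adj v u)

/-- Optimal number of further moves in the connected domination game on `G` with
predominated set `S`, from the position with played set `D`; `turn = true` means
Dominator (the minimizer) is to move.  The value is `⊤` if the player to move can
force the game to get stuck with an undominated vertex remaining.  The fuel
argument `n` is sufficient whenever `n + D.card ≥ Fintype.card V`. -/
noncomputable def val (G : SimpleGraph V) [DecidableRel G.Adj] (S : Finset V) :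
    Bool → ℕ → Finset V → ℕ∞
  | _, 0, D => if univ ⊆ S ∪ nbhd G D then 0 else ⊤
  | turn, n + 1, D =>
    if h : (legalMoves G S D).Nonempty then
      if turn then
        1 + (legalMoves G S D).inf' h fun v => val G S false n (insert v D)
      else
        1 + (legalMoves G S D).sup' h fun v => val G S true n (insert v D)
    else if univ ⊆ S ∪ nbhd G D then 0 else ⊤

/-- The Dominator-start game connected domination number of `G` with the vertices of `S`
predominated (`γ_cg(G|S)`; for `S = ∅` this is `γ_cg(G)`). -/
noncomputable def gammaCG (G : SimpleGraph V) [DecidableRel G.Adj] (S : Finset V) : ℕ∞ :=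
  val G S true (Fintype.card V) ∅

/-- The Staller-start game connected domination number of `G` with `S` predominated. -/
noncomputable def gammaCG' (G : SimpleGraph V) [DecidableRel G.Adj] (S : Finset V) : ℕ∞ :=
  val G S false (Fintype.card V) ∅

/-- The connected domination number of `G` with the set `S` predominated:
minimum size of a set `D` inducing a connected subgraph and dominating all
vertices outside `S`. -/
noncomputable def gammaC (G : SimpleGraph V) (S : Finset V) : ℕ :=
  sInf {k | ∃ D : Finset V, D.card = k ∧ (G.induce (D : Set V)).Connected ∧
    ∀ u, u ∈ S ∨ u ∈ D ∨ ∃ v ∈ D, G.Adj u v}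

/-- `l` is a legal sequence of first moves of the connected domination game on `G`
with predominated set `S`. -/
def LegalSeq (G : SimpleGraph V) [DecidableRel G.Adj] (S : Finset V) (l : List V) : Prop :=
  ∀ i (h : i < l.length), l.get ⟨i, h⟩ ∈ legalMoves G S (l.take i).toFinset

end ConnDomGame

namespace CDGAux

open ConnDomGame SimpleGraph

variable {V : Type*} [Fintype V] [DecidableEq V] (G : SimpleGraph V) [DecidableRel G.Adj]

theorem mem_nbhd {D : Finset V} {u : V} : u ∈ nbhd G D ↔ u ∈ D ∨ ∃ v ∈ D, G.Adj u v := by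
  simp [nbhd]

theorem mem_legal {S D : Finset V} {v : V} :
    v ∈ legalMoves G S D ↔ ¬ (nbhd G {v} ⊆ S ∪ nbhd G D) ∧ (D = ∅ ∨ ∃ u ∈ D, G.Adj v u) := by
  simp [legalMoves]

theorem nbhd_empty : nbhd G ∅ = ∅ := by simp [nbhd]

theorem subset_nbhd (D : Finset V) : D ⊆ nbhd G D := fun _ hu => (mem_nbhd G).mpr (Or.inl hu)

theorem not_mem_of_legal {T : Finset V} {v : V} (h : v ∈ legalMoves G ∅ T) : v ∉ T := by
  intro hvT
  refine ((mem_legal G).mp h).1 fun u hu => ?_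
  rcases (mem_nbhd G).mp hu with h1 | ⟨w, hw, hadj⟩
  · exact mem_union_right _ ((mem_nbhd G).mpr (Or.inl (mem_singleton.mp h1 ▸ hvT)))
  · exact mem_union_right _ ((mem_nbhd G).mpr (Or.inr ⟨v, hvT, mem_singleton.mp hw ▸ hadj⟩))

theorem dom_iff {T : Finset V} :
    univ ⊆ ∅ ∪ nbhd G T ↔ ∀ u, u ∈ T ∨ ∃ v ∈ T, G.Adj u v := by
  constructor
  · intro h u
    have := h (mem_univ u)
    rw [empty_union] at this
    exact (mem_nbhd G).mp this
  · intro h u _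
    exact mem_union_right _ ((mem_nbhd G).mpr (h u))

theorem val_of_dom {T : Finset V} (h : univ ⊆ ∅ ∪ nbhd G T) (n : ℕ) (turn : Bool) :
    val G ∅ turn n T = 0 := by
  have hleg : ¬ (legalMoves G ∅ T).Nonempty := by
    rintro ⟨v, hv⟩
    exact ((mem_legal G).mp hv).1 fun u _ => h (mem_univ u)
  cases n with
  | zero => rw [ConnDomGame.val, if_pos h]
  | succ n => rw [ConnDomGame.val, dif_neg hleg, if_pos h]

theorem conn_singleton (v : V) : (G.induce ({v} : Set V)).Connected := by
  rw [connected_induce_iff, ← Subgraph.singletonSubgraph_eq_induce]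
  exact Subgraph.singletonSubgraph_connected

theorem conn_insert {T : Finset V} (hT : (G.induce (T : Set V)).Connected) {v u : V}
    (hu : u ∈ T) (ha : G.Adj v u) :
    (G.induce ((insert v T : Finset V) : Set V)).Connected := by
  have h := connected_induce_union (G := G) (s := (T : Set V)) (t := {v}) hT.preconnected
    (conn_singleton G v).preconnected hu (Set.mem_singleton v) ha.symm
  rw [coe_insert, Set.insert_eq, Set.union_comm]
  exact h

def IsCDS (G : SimpleGraph V) (D : Finset V) : Prop :=
  (G.induce (D : Set V)).Connected ∧ ∀ u, u ∈ D ∨ ∃ v ∈ D, G.Adj u v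

theorem gammaC_le {D : Finset V} (hD : IsCDS G D) : gammaC G ∅ ≤ D.card :=
  Nat.sInf_le ⟨D, rfl, hD.1, fun u => Or.inr (hD.2 u)⟩

theorem exists_min_cds (hG : G.Connected) :
    ∃ D : Finset V, D.card = gammaC G ∅ ∧ IsCDS G D := by
  have hne : {k | ∃ D : Finset V, D.card = k ∧ (G.induce (D : Set V)).Connected ∧
      ∀ u, u ∈ (∅ : Finset V) ∨ u ∈ D ∨ ∃ v ∈ D, G.Adj u v}.Nonempty := by
    refine ⟨(univ : Finset V).card, univ, rfl, ?_, fun u => Or.inr (Or.inl (mem_univ u))⟩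
    rw [coe_univ]
    exact (induceUnivIso G).connected_iff.mpr hG
  obtain ⟨D, hcard, hconn, hdom⟩ := Nat.sInf_mem hne
  exact ⟨D, hcard, hconn, fun u => (hdom u).resolve_left (by simp)⟩

end CDGAux

set_option linter.unusedSectionVars false

namespace CDGAux

open ConnDomGame SimpleGraph Finset

variable {V : Type*} [Fintype V] [DecidableEq V] (G : SimpleGraph V) [DecidableRel G.Adj]

theorem gammaC_le_of_dom (hG : G.Connected) (T : Finset V)
    (hT : T = ∅ ∨ (G.induce (T : Set V)).Connected) :
    (gammaC G ∅ : ℕ∞) ≤ (if univ ⊆ ∅ ∪ nbhd G T then (0 : ℕ∞) else ⊤) + T.card := by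
  split_ifs with h
  · rcases hT with rfl | hT
    · obtain ⟨v⟩ := hG.nonempty
      have := h (mem_univ v)
      rw [nbhd_empty, union_empty] at this
      simp at this
    · rw [zero_add]
      exact_mod_cast gammaC_le G ⟨hT, (dom_iff G).mp h⟩
  · rw [top_add]
    exact le_top

theorem gammaC_le_val (hG : G.Connected) :
    ∀ (n : ℕ) (turn : Bool) (T : Finset V),
      (T = ∅ ∨ (G.induce (T : Set V)).Connected) →
      (gammaC G ∅ : ℕ∞) ≤ val G ∅ turn n T + T.card := by
  intro n
  induction n with
  | zero =>
    intro turn T hT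
    rw [ConnDomGame.val]
    exact gammaC_le_of_dom G hG T hT
  | succ n ih =>
    intro turn T hT
    rw [ConnDomGame.val]
    by_cases h : (legalMoves G ∅ T).Nonempty
    · rw [dif_pos h]
      have key : ∃ v ∈ legalMoves G ∅ T,
          (if turn = true then
              1 + (legalMoves G ∅ T).inf' h fun v => val G ∅ false n (insert v T)
            else
              1 + (legalMoves G ∅ T).sup' h fun v => val G ∅ true n (insert v T)) =
            1 + val G ∅ (!turn) n (insert v T) := by
        cases turn
        · obtain ⟨v, hv, hveq⟩ := Finset.exists_mem_eq_sup' h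
            (fun v => val G ∅ true n (insert v T))
          exact ⟨v, hv, by simp [hveq]⟩
        · obtain ⟨v, hv, hveq⟩ := Finset.exists_mem_eq_inf' h
            (fun v => val G ∅ false n (insert v T))
          exact ⟨v, hv, by simp [hveq]⟩
      obtain ⟨v, hv, hveq⟩ := key
      rw [hveq]
      have hvT : v ∉ T := not_mem_of_legal G hv
      have hins : insert v T = ∅ ∨ (G.induce ((insert v T : Finset V) : Set V)).Connected := by
        right
        rcases ((mem_legal G).mp hv).2 with rfl | ⟨u, hu, hadj⟩
        · rw [insert_empty, coe_singleton]
          exact conn_singleton G v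
        · rcases hT with rfl | hT
          · exact absurd hu (notMem_empty u)
          · exact conn_insert G hT hu hadj
      have := ih (!turn) (insert v T) hins
      refine this.trans (le_of_eq ?_)
      rw [card_insert_of_notMem hvT]
      push_cast
      ring
    · rw [dif_neg h]
      exact gammaC_le_of_dom G hG T hT

end CDGAux

namespace CDGAux

open ConnDomGame SimpleGraph Finset

variable {V : Type*} [Fintype V] [DecidableEq V] (G : SimpleGraph V) [DecidableRel G.Adj]

theorem exists_legal {D T : Finset V} (hD : IsCDS G D)
    (hT : T = ∅ ∨ (D ∩ T).Nonempty)
    (hundom : ¬ univ ⊆ ∅ ∪ nbhd G T) :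
    ∃ d ∈ D, d ∈ legalMoves G ∅ T := by
  obtain ⟨u, -, hu⟩ := Finset.not_subset.mp hundom
  have hu' : u ∉ nbhd G T := fun h => hu (mem_union_right _ h)
  rcases hT with rfl | ⟨d0, hd0⟩
  · have hd : ∃ d, d ∈ D := by
      rcases hD.2 u with h | ⟨d, hd, _⟩
      exacts [⟨u, h⟩, ⟨d, hd⟩]
    obtain ⟨d, hd⟩ := hd
    refine ⟨d, hd, (mem_legal G).mpr ⟨?_, Or.inl rfl⟩⟩
    intro hsub
    have := hsub ((mem_nbhd G).mpr (Or.inl (mem_singleton_self d)))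
    rw [nbhd_empty, union_empty] at this
    exact absurd this (notMem_empty d)
  · by_contra hno
    push_neg at hno
    have hkey : ∀ d ∈ D, (∃ w ∈ T, G.Adj d w) → nbhd G {d} ⊆ ∅ ∪ nbhd G T := by
      intro d hd hadj
      by_contra hn
      exact hno d hd ((mem_legal G).mpr ⟨hn, Or.inr hadj⟩)
    have hstep : ∀ (a b : V), a ∈ D → a ∈ nbhd G T → G.Adj a b → b ∈ nbhd G T := by
      intro a b haD ha hab
      rcases (mem_nbhd G).mp ha with haT | ⟨w, hw, haw⟩
      · exact (mem_nbhd G).mpr (Or.inr ⟨a, haT, hab.symm⟩)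
      · have hsub := hkey a haD ⟨w, hw, haw⟩
        have hb : b ∈ nbhd G {a} := (mem_nbhd G).mpr (Or.inr ⟨a, mem_singleton_self a, hab.symm⟩)
        have := hsub hb
        rwa [empty_union] at this
    have hDdom : ∀ d ∈ D, d ∈ nbhd G T := by
      intro d hd
      have hd0D : d0 ∈ D := (mem_inter.mp hd0).1
      have hd0T : d0 ∈ T := (mem_inter.mp hd0).2
      obtain ⟨p⟩ := hD.1.preconnected ⟨d0, by simpa using hd0D⟩ ⟨d, by simpa using hd⟩
      have aux : ∀ (x y : ((D : Set V) : Type _)) (_ : (G.induce (D : Set V)).Walk x y),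
          (x : V) ∈ nbhd G T → (y : V) ∈ nbhd G T := by
        intro x y p
        induction p with
        | nil => exact id
        | @cons a b c hadj q ih =>
          intro ha
          have hab : G.Adj (a : V) (b : V) := hadj
          exact ih (hstep a b (by simpa using a.2) ha hab)
      exact aux _ _ p (subset_nbhd G T hd0T)
    rcases hD.2 u with h | ⟨d, hd, hadj⟩
    · exact hu' (hDdom u h)
    · rcases (mem_nbhd G).mp (hDdom d hd) with hdT | ⟨w, hw, hdw⟩
      · exact hu' ((mem_nbhd G).mpr (Or.inr ⟨d, hdT, hadj⟩))
      · have hsub := hkey d hd ⟨w, hw, hdw⟩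
        have : u ∈ nbhd G {d} := (mem_nbhd G).mpr (Or.inr ⟨d, mem_singleton_self d, hadj⟩)
        have := hsub this
        rw [empty_union] at this
        exact hu' this

end CDGAux

namespace CDGAux

open ConnDomGame SimpleGraph Finset

variable {V : Type*} [Fintype V] [DecidableEq V] (G : SimpleGraph V) [DecidableRel G.Adj]

theorem dom_of_subset {D T : Finset V} (hD : IsCDS G D) (hsub : D ⊆ T) :
    univ ⊆ ∅ ∪ nbhd G T := by
  refine (dom_iff G).mpr fun u => ?_
  rcases hD.2 u with h | ⟨v, hv, hadj⟩
  exacts [Or.inl (hsub h), Or.inr ⟨v, hsub hv, hadj⟩]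

theorem val_le {D : Finset V} (hD : IsCDS G D) :
    ∀ (n : ℕ) (turn : Bool) (T : Finset V),
      (if turn then (T = ∅ ∨ (D ∩ T).Nonempty) else (D ∩ T).Nonempty) →
      Fintype.card V ≤ n + T.card →
      val G ∅ turn n T ≤
        (((if turn then 2 * (D \ T).card - 1 else 2 * (D \ T).card) : ℕ) : ℕ∞) := by
  intro n
  induction n with
  | zero =>
    intro turn T _ hfuel
    have hTuniv : T = univ := by
      apply Finset.eq_univ_of_card
      have := Finset.card_le_univ T
      omega
    subst hTuniv
    rw [val_of_dom G (fun u _ => mem_union_right _ (subset_nbhd G univ (mem_univ u)))]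
    exact zero_le
  | succ n ih =>
    intro turn T hT hfuel
    by_cases hdom : univ ⊆ ∅ ∪ nbhd G T
    · rw [val_of_dom G hdom]
      exact zero_le
    · have hT' : T = ∅ ∨ (D ∩ T).Nonempty := by
        cases turn
        · exact Or.inr (by simpa using hT)
        · simpa using hT
      obtain ⟨d, hdD, hdleg⟩ := exists_legal G hD hT' hdom
      have hne : (legalMoves G ∅ T).Nonempty := ⟨d, hdleg⟩
      have hdT : d ∉ T := not_mem_of_legal G hdleg
      have hk1 : 1 ≤ (D \ T).card :=
        Finset.card_pos.mpr ⟨d, mem_sdiff.mpr ⟨hdD, hdT⟩⟩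
      rw [ConnDomGame.val, dif_pos hne]
      cases turn
      · -- Staller's move
        rw [if_neg (by simp), if_neg (by simp)]
        have hsup : ((legalMoves G ∅ T).sup' hne fun v => val G ∅ true n (insert v T)) ≤
            ((2 * (D \ T).card - 1 : ℕ) : ℕ∞) := by
          apply Finset.sup'_le
          intro v hv
          have hvT : v ∉ T := not_mem_of_legal G hv
          have hT'' : insert v T = ∅ ∨ (D ∩ insert v T).Nonempty := by
            obtain ⟨d0, hd0⟩ := by simpa using hT
            exact Or.inr ⟨d0, mem_inter.mpr ⟨(mem_inter.mp hd0).1,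
              mem_insert_of_mem (mem_inter.mp hd0).2⟩⟩
          have hfuel' : Fintype.card V ≤ n + (insert v T).card := by
            rw [card_insert_of_notMem hvT]; omega
          have h1 := ih true (insert v T) (by simpa using hT'') hfuel'
          rw [if_pos rfl] at h1
          refine h1.trans ?_
          have hle : (D \ insert v T).card ≤ (D \ T).card :=
            Finset.card_le_card (Finset.sdiff_subset_sdiff le_rfl (subset_insert v T))
          exact_mod_cast Nat.sub_le_sub_right (Nat.mul_le_mul_left 2 hle) 1
        calc 1 + ((legalMoves G ∅ T).sup' hne fun v => val G ∅ true n (insert v T)) ≤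
            1 + ((2 * (D \ T).card - 1 : ℕ) : ℕ∞) := add_le_add_right hsup 1
          _ = ((2 * (D \ T).card : ℕ) : ℕ∞) := by
              rw [← Nat.cast_one, ← Nat.cast_add]
              exact Nat.cast_inj.mpr (by omega)
      · -- Dominator's move
        rw [if_pos rfl, if_pos rfl]
        have hinf : ((legalMoves G ∅ T).inf' hne fun v => val G ∅ false n (insert v T)) ≤
            val G ∅ false n (insert d T) := Finset.inf'_le _ hdleg
        have hT'' : (D ∩ insert d T).Nonempty :=
          ⟨d, mem_inter.mpr ⟨hdD, mem_insert_self d T⟩⟩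
        have hfuel' : Fintype.card V ≤ n + (insert d T).card := by
          rw [card_insert_of_notMem hdT]; omega
        have h1 := ih false (insert d T) (by simpa using hT'') hfuel'
        rw [if_neg (by simp)] at h1
        have hcard : (D \ insert d T).card = (D \ T).card - 1 := by
          rw [Finset.sdiff_insert, Finset.card_erase_of_mem (mem_sdiff.mpr ⟨hdD, hdT⟩)]
        rw [hcard] at h1
        calc 1 + ((legalMoves G ∅ T).inf' hne fun v => val G ∅ false n (insert v T)) ≤
            1 + ((2 * ((D \ T).card - 1) : ℕ) : ℕ∞) := add_le_add_right (hinf.trans h1) 1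
          _ = ((2 * (D \ T).card - 1 : ℕ) : ℕ∞) := by
              rw [← Nat.cast_one, ← Nat.cast_add]
              exact Nat.cast_inj.mpr (by omega)

end CDGAux

open ConnDomGame in
/-- For every connected graph `G`, `γ_c(G) ≤ γ_cg(G) ≤ 2γ_c(G) − 1`. -/
theorem gammaC_le_gammaCG_le {V : Type*} [Fintype V] [DecidableEq V]
    (G : SimpleGraph V) [DecidableRel G.Adj] (hG : G.Connected) :
    (gammaC G ∅ : ℕ∞) ≤ gammaCG G ∅ ∧
      gammaCG G ∅ ≤ ((2 * gammaC G ∅ - 1 : ℕ) : ℕ∞) := by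
  obtain ⟨D, hcard, hD⟩ := CDGAux.exists_min_cds G hG
  constructor
  · have h := CDGAux.gammaC_le_val G hG (Fintype.card V) true ∅ (Or.inl rfl)
    simpa [gammaCG] using h
  · have h := CDGAux.val_le G hD (Fintype.card V) true ∅ (by simp) (by simp)
    rw [if_pos rfl, Finset.sdiff_empty, hcard] at h
    exact h
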